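/- arXiv:2301.00175 — 3 statements merged into one kernel-verified Lean document; each statement's English description precedes it below -/
import Mathlib

section
/- Let A = (a_{i,j})_{1≤j≤i≤n} be a triangular array of integers with decorations from {↖, ↗, ↖↗, ∅} whose bottom row is weakly increasing, i.e. a_{n,1} ≤ a_{n,2} ≤ ⋯ ≤ a_{n,n}. Then A is an arrowed Gelfand–Tsetlin pattern if and only if the following hold: (i) the undecorated array is an ordinary Gelfand–Tsetlin pattern, i.e. a_{i+1,j} ≤ a_{i,j} ≤ a_{i+1,j+1} for all 1 ≤ j ≤ i ≤ n−1 (in particular all rows are weakly increasing); (ii) whenever an entry a_{i,j} (with 2 ≤ i, j ≤ i−1) is equal to its northeast neighbour a_{i−1,j} and decor(a_{i,j}) ∈ {↗, ↖↗}, then a_{i,j+1} = a_{i,j} and decor(a_{i,j+1}) ∈ {↖, ↖↗}; (iii) whenever an entry a_{i,j} (with 2 ≤ i, 2 ≤ j) is equal to its northwest neighbour a_{i−1,j−1} and decor(a_{i,j}) ∈ {↖, ↖↗}, then a_{i,j−1} = a_{i,j} and decor(a_{i,j−1}) ∈ {↗, ↖↗}. Moreover, in this case the sign of A equals (−1) raised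 to the number of pairs (i,j), 1 ≤ j ≤ i ≤ n−1, with a_{i,j} = a_{i+1,j} = a_{i+1,j+1}, decor(a_{i+1,j}) ∈ {↗, ↖↗} and decor(a_{i+1,j+1}) ∈ {↖, ↖↗}. -/
noncomputable section

/-- Membership in the signed interval `⟨a,b⟩`: this is `[a,b]` if `a ≤ b`, empty if
`b = a − 1`, and `[b+1, a−1]` if `b < a − 1`. -/
def SIMem (x a b : ℤ) : Prop := (a ≤ x ∧ x ≤ b) ∨ (b + 1 ≤ x ∧ x ≤ a - 1)

open Classical in
/-- Characterization of arrowed Gelfand–Tsetlin patterns with weakly increasing bottom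
row, together with the simplified description of the sign.  The triangular array has
rows `0,…,n−1` (row `i` having entries in columns `0,…,i`); `dl i j` records whether the
entry `(i,j)` carries `↖` and `dr i j` whether it carries `↗`. -/
theorem stmt_5 (n : ℕ) (hn : 1 ≤ n)
    (entry : ℕ → ℕ → ℤ) (dl dr : ℕ → ℕ → Bool)
    (hmono : ∀ j, j + 1 < n → entry (n - 1) j ≤ entry (n - 1) (j + 1)) :
    -- the defining condition of an arrowed Gelfand–Tsetlin pattern
    ((∀ i j, i + 1 < n → j ≤ i →
        SIMem (entry i j)
          (entry (i + 1) j + if dr (i + 1) j then 1 else 0)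
          (entry (i + 1) (j + 1) - if dl (i + 1) (j + 1) then 1 else 0)) ↔
      -- (i): ordinary Gelfand–Tsetlin pattern
      ((∀ i j, i + 1 < n → j ≤ i →
          entry (i + 1) j ≤ entry i j ∧ entry i j ≤ entry (i + 1) (j + 1)) ∧
        -- (ii)
        (∀ r c, r < n → c < r →
          (entry r c = entry (r - 1) c ∧ dr r c = true) →
            entry r (c + 1) = entry r c ∧ dl r (c + 1) = true) ∧
        -- (iii)
        (∀ r c, r < n → 1 ≤ c → c ≤ r →
          (entry r c = entry (r - 1) (c - 1) ∧ dl r c = true) →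
            entry r (c - 1) = entry r c ∧ dr r (c - 1) = true))) ∧
    -- moreover, in this case the sign simplifies:
    ((∀ i j, i + 1 < n → j ≤ i →
        SIMem (entry i j)
          (entry (i + 1) j + if dr (i + 1) j then 1 else 0)
          (entry (i + 1) (j + 1) - if dl (i + 1) (j + 1) then 1 else 0)) →
      ((Finset.range n ×ˢ Finset.range n).filter fun p =>
          p.1 + 1 < n ∧ p.2 ≤ p.1 ∧
            (entry (p.1 + 1) (p.2 + 1) - (if dl (p.1 + 1) (p.2 + 1) then 1 else 0)) <
              (entry (p.1 + 1) p.2 + (if dr (p.1 + 1) p.2 then 1 else 0)) - 1).card =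
      ((Finset.range n ×ˢ Finset.range n).filter fun p =>
          p.1 + 1 < n ∧ p.2 ≤ p.1 ∧
            entry p.1 p.2 = entry (p.1 + 1) p.2 ∧
            entry p.1 p.2 = entry (p.1 + 1) (p.2 + 1) ∧
            dr (p.1 + 1) p.2 = true ∧ dl (p.1 + 1) (p.2 + 1) = true).card) := by
  -- step: from the AGTP condition at one position plus monotonicity of row i+1,
  -- GT inequalities at that position
  have step : (∀ i j, i + 1 < n → j ≤ i →
        SIMem (entry i j)
          (entry (i + 1) j + if dr (i + 1) j then 1 else 0)
          (entry (i + 1) (j + 1) - if dl (i + 1) (j + 1) then 1 else 0)) →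
      ∀ i, i + 1 < n → (∀ j, j + 1 ≤ i + 1 → entry (i+1) j ≤ entry (i+1) (j+1)) →
      ∀ j, j ≤ i → entry (i+1) j ≤ entry i j ∧ entry i j ≤ entry (i+1) (j+1) := by
    intro hA i hi hm j hj
    have hbc := hm j (by omega)
    have h := hA i j hi hj
    cases hdr : dr (i+1) j <;> cases hdl : dl (i+1) (j+1) <;>
      simp [SIMem, hdr, hdl] at h <;> omega
  -- all rows are weakly increasing
  have rowmono : (∀ i j, i + 1 < n → j ≤ i →
        SIMem (entry i j)
          (entry (i + 1) j + if dr (i + 1) j then 1 else 0)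
          (entry (i + 1) (j + 1) - if dl (i + 1) (j + 1) then 1 else 0)) →
      ∀ i, i < n → ∀ j, j + 1 ≤ i → entry i j ≤ entry i (j + 1) := by
    intro hA
    have key : ∀ d i, i + d + 1 = n → ∀ j, j + 1 ≤ i → entry i j ≤ entry i (j+1) := by
      intro d
      induction d with
      | zero =>
        intro i hi j hj
        obtain rfl : i = n - 1 := by omega
        exact hmono j (by omega)
      | succ d ih =>
        intro i hi j hj
        have hm := ih (i+1) (by omega)
        have h1 := step hA i (by omega) hm j (by omega)
        have h2 := step hA i (by omega) hm (j+1) (by omega)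
        exact le_trans h1.2 h2.1
    intro i hi j hj
    exact key (n - 1 - i) i (by omega) j hj
  -- (i) follows from AGTP
  have gtA : (∀ i j, i + 1 < n → j ≤ i →
        SIMem (entry i j)
          (entry (i + 1) j + if dr (i + 1) j then 1 else 0)
          (entry (i + 1) (j + 1) - if dl (i + 1) (j + 1) then 1 else 0)) →
      ∀ i j, i + 1 < n → j ≤ i →
        entry (i + 1) j ≤ entry i j ∧ entry i j ≤ entry (i + 1) (j + 1) :=
    fun hA i j hi hj => step hA i hi (fun k hk => rowmono hA (i+1) hi k hk) j hj
  constructor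
  · constructor
    · -- forward direction
      intro hA
      refine ⟨gtA hA, ?_, ?_⟩
      · -- (ii)
        intro r c hr hc ⟨heq, hdrr⟩
        obtain ⟨i, rfl⟩ : ∃ i, r = i + 1 := ⟨r - 1, by omega⟩
        simp only [Nat.add_sub_cancel] at heq
        have h := hA i c hr (by omega)
        have hbc := rowmono hA (i+1) hr c (by omega)
        cases hdl : dl (i+1) (c+1) <;>
          simp [SIMem, hdrr, hdl] at h ⊢ <;> omega
      · -- (iii)
        intro r c hr hc1 hc ⟨heq, hdll⟩
        obtain ⟨i, rfl⟩ : ∃ i, r = i + 1 := ⟨r - 1, by omega⟩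
        obtain ⟨j, rfl⟩ : ∃ j, c = j + 1 := ⟨c - 1, by omega⟩
        simp only [Nat.add_sub_cancel] at heq
        have h := hA i j hr (by omega)
        have hbc := rowmono hA (i+1) hr j (by omega)
        cases hdrx : dr (i+1) j <;>
          simp [SIMem, hdrx, hdll] at h ⊢ <;> omega
    · -- backward direction
      rintro ⟨h1, h2, h3⟩ i j hi hj
      have hab := h1 i j hi hj
      by_cases hc1 : entry i j = entry (i+1) j ∧ dr (i+1) j = true
      · have := h2 (i+1) j hi (by omega) ⟨by simpa using hc1.1.symm, hc1.2⟩
        right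
        rw [hc1.2, this.2]
        simp
        omega
      · by_cases hc2 : entry i j = entry (i+1) (j+1) ∧ dl (i+1) (j+1) = true
        · have := h3 (i+1) (j+1) hi (by omega) (by omega)
            ⟨by simpa using hc2.1.symm, hc2.2⟩
          simp only [Nat.add_sub_cancel] at this
          right
          rw [hc2.2, this.2]
          simp
          omega
        · left
          cases hdr : dr (i+1) j <;> cases hdl : dl (i+1) (j+1) <;>
            simp [hdr, hdl] at hc1 hc2 ⊢ <;> omega
  · -- the sign
    intro hA
    congr 1
    apply Finset.filter_congr
    rintro ⟨i, j⟩ hp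
    simp only [Finset.mem_product, Finset.mem_range] at hp
    constructor
    · rintro ⟨hi, hj, hlt⟩
      refine ⟨hi, hj, ?_⟩
      have hbc := rowmono hA (i+1) hi j (by omega)
      have h := hA i j hi hj
      cases hdr : dr (i+1) j <;> cases hdl : dl (i+1) (j+1) <;>
        simp [SIMem, hdr, hdl] at h hlt ⊢ <;> omega
    · rintro ⟨hi, hj, he1, he2, hdr, hdl⟩
      refine ⟨hi, hj, ?_⟩
      dsimp only at he1 he2 ⊢
      rw [hdr, hdl]
      simp
      omega
end
end

section
/- Let n ≥ 1 and l ≥ 0 be integers and let w be a further indeterminate. Then, in the field ℚ(w, X_1,…,X_n), det_{1≤i,j≤n}( X_i^{j−l−n−1}(1+X_i)^{j−1}(1+wX_i)^{n−j} − X_i^{−j+l+n+1}(1+X_i^{−1})^{j−1}(1+wX_i^{−1})^{n−j} ) = ∏_{1≤i<j≤n}(X_j + X_j^{−1} − X_i − X_i^{−1}) · ∏_{i=1}^n (X_i − X_i^{−1}) · det_{1≤i,j≤n}( c_{i,j} ), where c_{i,j} = Σ_{p=0}^{j−1} Σ_{q=0}^{n−j} sgn(p−q−l−1) · w^{n−j−q}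 · C(j−1,p) · C(n−j,q) · h_{|p−q−l−1|−i}(X_1, X_1^{−1}, …, X_i, X_i^{−1}). -/
noncomputable section

/-- The complete homogeneous symmetric polynomial `h_d(Y_1,…,Y_N)`: the sum of all
monomials of degree `d`. -/
def hcomp {A : Type*} [CommRing A] (N d : ℕ) (Y : Fin N → A) : A :=
  ∑ k ∈ Finset.univ.filter (fun k : Fin N → Fin (d + 1) => ∑ i, (k i : ℕ) = d),
    ∏ i, Y i ^ (k i : ℕ)

/-- `h_d` for `d ∈ ℤ`, with `h_d = 0` for `d < 0`. -/
def hz {A : Type*} [CommRing A] (N : ℕ) (d : ℤ) (Y : Fin N → A) : A :=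
  if 0 ≤ d then hcomp N d.toNat Y else 0

/-- The field `ℚ(w, X_1, …, X_n)` of rational functions. -/
abbrev RF (n : ℕ) : Type := FractionRing (MvPolynomial (Fin n ⊕ Unit) ℚ)

/-- The variable `X_i`. -/
def Xv (n : ℕ) (i : Fin n) : RF n :=
  algebraMap (MvPolynomial (Fin n ⊕ Unit) ℚ) (RF n) (MvPolynomial.X (Sum.inl i))

/-- The variable `w`. -/
def wv (n : ℕ) : RF n :=
  algebraMap (MvPolynomial (Fin n ⊕ Unit) ℚ) (RF n) (MvPolynomial.X (Sum.inr ()))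

/-- The `2(i+1)` arguments `X_1, X_1⁻¹, …, X_{i+1}, X_{i+1}⁻¹` (0-indexed `i < n`). -/
def args (n i : ℕ) (hi : i < n) : Fin (2 * (i + 1)) → RF n := fun t =>
  if t.1 % 2 = 0 then Xv n ⟨t.1 / 2, by omega⟩ else (Xv n ⟨t.1 / 2, by omega⟩)⁻¹

/-- The entry `c_{i,j}` (with `i, j` 0-indexed, paper's indices being `i+1, j+1`). -/
def cent (n l : ℕ) (i j : Fin n) : RF n :=
  ∑ p ∈ Finset.range ((j : ℕ) + 1), ∑ q ∈ Finset.range (n - (j : ℕ)),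
    ((Int.sign ((p : ℤ) - q - l - 1) : ℤ) : RF n) * wv n ^ (n - 1 - (j : ℕ) - q) *
      (Nat.choose (j : ℕ) p : RF n) * (Nat.choose (n - 1 - (j : ℕ)) q : RF n) *
      hz (2 * ((i : ℕ) + 1))
        (((((p : ℤ) - q - l - 1).natAbs : ℤ) - ((i : ℕ) + 1)))
        (args n (i : ℕ) i.2)

/-!
The complete homogeneous polynomials satisfy the divided-difference formula
`∑_r y_r^e / ∏_{s ≠ r} (y_r - y_s) = h_{e-N+1}(y_1, …, y_N)` for distinct `y`; by induction on `N`,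
because `y_0 - y_1 = (y_r - y_1) - (y_r - y_0)` turns the sum over `N + 2` nodes into a difference
of two sums over `N + 1` nodes, matching `h(a, S) - h(b, S) = (a - b) h(a, b, S)`.

For the nodes `X_1^{±1}, …, X_i^{±1}` the two nodes `X_v, X_v⁻¹` pair up and the denominators
factor through `Y_v = X_v + X_v⁻¹`, since `(z - X_u)(z - X_u⁻¹) = z (z + z⁻¹ - Y_u)`. With
`m = p - q - l - 1` this gives
`sgn(m) h_{|m|-i} = ∑_{v ≤ i} (X_v^m - X_v^{-m}) / ((X_v - X_v⁻¹) ∏_{u ≤ i, u ≠ v} (Y_v - Y_u))`,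
while expanding the binomials writes each entry of the left-hand matrix `A` as a combination of the
same `X^m - X^{-m}`. Hence `(c_{i,j}) = L A` with `L` lower triangular with diagonal entries
`((X_i - X_i⁻¹) ∏_{u < i} (Y_i - Y_u))⁻¹`, and the identity is `det (L A) = det L · det A`.
-/

open Finset

section CompleteHomogeneous

variable {A : Type*} [CommRing A]

lemma le_of_mem_antidiagonalTuple {N d : ℕ} {x : Fin N → ℕ} (hx : x ∈ Nat.antidiagonalTuple N d)
    (i : Fin N) : x i ≤ d :=
  Nat.mem_antidiagonalTuple.1 hx ▸ single_le_sum (fun _ _ => Nat.zero_le _) (mem_univ i)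

lemma hcomp_eq_sum_antidiagonalTuple (N d : ℕ) (Y : Fin N → A) :
    hcomp N d Y = ∑ x ∈ Nat.antidiagonalTuple N d, ∏ i, Y i ^ x i := by
  refine sum_bij (fun k _ i => (k i : ℕ)) (fun k hk => ?_) (fun k _ k' _ h => ?_)
    (fun x hx => ?_) (fun _ _ => rfl)
  · simpa [Nat.mem_antidiagonalTuple] using hk
  · exact funext fun i => Fin.ext (congrFun h i)
  · refine ⟨fun i => ⟨x i, Nat.lt_succ_of_le (le_of_mem_antidiagonalTuple hx i)⟩, ?_, rfl⟩
    simpa [Nat.mem_antidiagonalTuple] using hx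

lemma sum_antidiagonalTuple_succ {M : Type*} [AddCommMonoid M] (N d : ℕ)
    (f : (Fin (N + 1) → ℕ) → M) :
    ∑ x ∈ Nat.antidiagonalTuple (N + 1) d, f x =
      ∑ p ∈ antidiagonal d, ∑ x ∈ Nat.antidiagonalTuple N p.2, f (Fin.cons p.1 x) := by
  rw [sum_sigma']
  refine sum_nbij' (fun x => ⟨(x 0, d - x 0), Fin.tail x⟩) (fun y => Fin.cons y.1.1 y.2)
    ?_ ?_ ?_ ?_ ?_
  · intro x hx
    simp only [mem_sigma, HasAntidiagonal.mem_antidiagonal, Nat.mem_antidiagonalTuple,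
      Fin.sum_univ_succ] at hx ⊢
    simp only [Fin.tail]
    omega
  · rintro ⟨⟨a, b⟩, x⟩ hx
    simp only [mem_sigma, HasAntidiagonal.mem_antidiagonal, Nat.mem_antidiagonalTuple,
      Fin.sum_univ_succ, Fin.cons_zero, Fin.cons_succ] at hx ⊢
    omega
  · intro x _
    simp
  · rintro ⟨⟨a, b⟩, x⟩ hx
    simp only [mem_sigma, HasAntidiagonal.mem_antidiagonal] at hx
    simp [← hx.1]
  · intro x _
    simp

lemma hcomp_zero (N : ℕ) (Y : Fin N → A) : hcomp N 0 Y = 1 := by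
  simp [hcomp_eq_sum_antidiagonalTuple, Nat.antidiagonalTuple_zero_right]

lemma hcomp_fin_one (d : ℕ) (Y : Fin 1 → A) : hcomp 1 d Y = Y 0 ^ d := by
  simp [hcomp_eq_sum_antidiagonalTuple]

lemma hcomp_cons (N d : ℕ) (a : A) (Y : Fin N → A) :
    hcomp (N + 1) d (Fin.cons a Y) = ∑ p ∈ antidiagonal d, a ^ p.1 * hcomp N p.2 Y := by
  simp only [hcomp_eq_sum_antidiagonalTuple, sum_antidiagonalTuple_succ, mul_sum,
    Fin.prod_univ_succ, Fin.cons_zero, Fin.cons_succ]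

lemma sum_antidiagonal_antidiagonal_assoc {M : Type*} [AddCommMonoid M] (e : ℕ)
    (f : ℕ → ℕ → ℕ → M) :
    ∑ p ∈ antidiagonal e, ∑ q ∈ antidiagonal p.1, f q.1 q.2 p.2 =
      ∑ p ∈ antidiagonal e, ∑ q ∈ antidiagonal p.2, f p.1 q.1 q.2 := by
  rw [sum_sigma', sum_sigma']
  refine sum_nbij' (fun x => ⟨(x.2.1, x.2.2 + x.1.2), (x.2.2, x.1.2)⟩)
    (fun x => ⟨(x.1.1 + x.2.1, x.2.2), (x.1.1, x.2.1)⟩) ?_ ?_ ?_ ?_ ?_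
  all_goals rintro ⟨⟨a, b⟩, ⟨c, d⟩⟩ h
  all_goals simp only [mem_sigma, HasAntidiagonal.mem_antidiagonal] at h ⊢
  · exact ⟨by omega, trivial⟩
  · exact ⟨by omega, trivial⟩
  · rw [h.2]
  · rw [h.2]

lemma sub_mul_sum_antidiagonal_pow (a b : A) (c : ℕ) :
    (a - b) * ∑ p ∈ antidiagonal c, a ^ p.1 * b ^ p.2 = a ^ (c + 1) - b ^ (c + 1) := by
  rw [Nat.sum_antidiagonal_eq_sum_range_succ_mk, mul_comm, ← geom_sum₂_mul]
  simp

lemma hcomp_cons_sub_hcomp_cons (N e : ℕ) (a b : A) (Y : Fin N → A) :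
    hcomp (N + 1) (e + 1) (Fin.cons a Y) - hcomp (N + 1) (e + 1) (Fin.cons b Y) =
      (a - b) * hcomp (N + 2) e (Fin.cons a (Fin.cons b Y)) := calc
  _ = ∑ p ∈ antidiagonal e, (a ^ (p.1 + 1) - b ^ (p.1 + 1)) * hcomp N p.2 Y := by
    simp [hcomp_cons, ← sum_sub_distrib, ← sub_mul, Nat.sum_antidiagonal_succ]
  _ = (a - b) * ∑ p ∈ antidiagonal e, ∑ q ∈ antidiagonal p.1,
        a ^ q.1 * b ^ q.2 * hcomp N p.2 Y := by
    simp_rw [← sub_mul_sum_antidiagonal_pow, mul_sum, sum_mul, mul_assoc]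
  _ = _ := by
    rw [sum_antidiagonal_antidiagonal_assoc e (fun i j k => a ^ i * b ^ j * hcomp N k Y)]
    simp [hcomp_cons, mul_sum, mul_assoc]

lemma hz_cons_sub_hz_cons (N : ℕ) (d : ℤ) (a b : A) (Y : Fin N → A) :
    hz (N + 1) d (Fin.cons a Y) - hz (N + 1) d (Fin.cons b Y) =
      (a - b) * hz (N + 2) (d - 1) (Fin.cons a (Fin.cons b Y)) := by
  unfold hz
  rcases lt_trichotomy d 0 with hd | rfl | hd
  · rw [if_neg, if_neg, if_neg] <;> first | omega | ring
  · simp [hcomp_zero]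
  · obtain ⟨e, rfl⟩ : ∃ e : ℕ, d = e + 1 := ⟨d.toNat - 1, by omega⟩
    rw [if_pos (by omega), if_pos (by omega), if_pos (by omega), add_sub_cancel_right,
      Int.toNat_natCast, show ((e : ℤ) + 1).toNat = e + 1 by omega]
    exact hcomp_cons_sub_hcomp_cons N e a b Y

lemma hz_comp_succAbove_one_sub_hz_comp_succAbove_zero (N : ℕ) (d : ℤ) (y : Fin (N + 2) → A) :
    hz (N + 1) d (y ∘ (1 : Fin (N + 2)).succAbove) -
        hz (N + 1) d (y ∘ (0 : Fin (N + 2)).succAbove) =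
      (y 0 - y 1) * hz (N + 2) (d - 1) y := by
  induction y using Fin.consCases with | cons a y =>
  induction y using Fin.consCases with | cons b Y =>
  have h1 : (Fin.cons a (Fin.cons b Y) : Fin (N + 2) → A) ∘ (1 : Fin (N + 2)).succAbove =
      Fin.cons a Y := by
    ext j; cases j using Fin.cases <;> simp
  have h0 : (Fin.cons a (Fin.cons b Y) : Fin (N + 2) → A) ∘ (0 : Fin (N + 2)).succAbove =
      Fin.cons b Y := by
    ext j; simp
  rw [h1, h0, hz_cons_sub_hz_cons]
  simp

end CompleteHomogeneous

open Lagrange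

section LagrangeSum

variable {F : Type*} [Field F]

lemma nodalWeight_map {ι κ : Type*} [DecidableEq ι] [DecidableEq κ] (s : Finset κ) (φ : κ ↪ ι)
    (v : ι → F) (t : κ) : nodalWeight (s.map φ) v (φ t) = nodalWeight s (v ∘ φ) t := by
  rw [nodalWeight, ← map_erase, prod_map]
  rfl

lemma erase_erase_succAbove {k : ℕ} (p : Fin (k + 1)) (i : Fin k) :
    (univ.erase (p.succAbove i)).erase p = (univ.erase i).map p.succAboveEmb := by
  rw [erase_right_comm, Fin.univ_succAbove k p, erase_cons, ← Fin.coe_succAboveEmb, ← map_erase]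

lemma nodalWeight_succAbove {k : ℕ} (y : Fin (k + 1) → F) (p : Fin (k + 1)) (i : Fin k) :
    nodalWeight univ y (p.succAbove i) =
      (y (p.succAbove i) - y p)⁻¹ * nodalWeight univ (y ∘ p.succAbove) i := by
  have hp : p ∈ univ.erase (p.succAbove i) := mem_erase.2 ⟨(Fin.succAbove_ne p i).symm, mem_univ p⟩
  rw [nodalWeight, ← mul_prod_erase _ _ hp, erase_erase_succAbove, prod_map]
  rfl

lemma sum_nodalWeight_mul_pow_mul_sub {k : ℕ} (y : Fin (k + 1) → F) (hy : Function.Injective y)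
    (p : Fin (k + 1)) (e : ℕ) :
    ∑ r, nodalWeight univ y r * y r ^ e * (y r - y p) =
      ∑ i, nodalWeight univ (y ∘ p.succAbove) i * (y ∘ p.succAbove) i ^ e := by
  rw [Fin.sum_univ_succAbove _ p, sub_self, mul_zero, zero_add]
  refine sum_congr rfl fun i _ => ?_
  have : y (p.succAbove i) - y p ≠ 0 := sub_ne_zero.2 (hy.ne (Fin.succAbove_ne p i))
  rw [nodalWeight_succAbove]
  field_simp
  rfl

theorem sum_nodalWeight_mul_pow_eq_hz (k e : ℕ) (y : Fin (k + 1) → F)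
    (hy : Function.Injective y) :
    ∑ r, nodalWeight univ y r * y r ^ e = hz (k + 1) (e - k) y := by
  induction k with
  | zero => simp [nodalWeight, hz, hcomp_fin_one]
  | succ k ih =>
    have h01 : y 0 - y 1 ≠ 0 := sub_ne_zero.2 (hy.ne Fin.zero_ne_one)
    have hdel (p : Fin (k + 2)) :
        ∑ r, nodalWeight univ y r * y r ^ e * (y r - y p) = hz (k + 1) (e - k) (y ∘ p.succAbove) :=
      (sum_nodalWeight_mul_pow_mul_sub y hy p e).trans
        (ih _ (hy.comp Fin.succAbove_right_injective))
    apply mul_left_cancel₀ h01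
    calc (y 0 - y 1) * ∑ r, nodalWeight univ y r * y r ^ e
        = ∑ r, nodalWeight univ y r * y r ^ e * (y r - y 1) -
            ∑ r, nodalWeight univ y r * y r ^ e * (y r - y 0) := by
          rw [mul_sum, ← sum_sub_distrib]
          exact sum_congr rfl fun r _ => by ring
      _ = (y 0 - y 1) * hz (k + 2) (e - (k + 1)) y := by
          rw [hdel, hdel, hz_comp_succAbove_one_sub_hz_comp_succAbove_zero, sub_sub]

end LagrangeSum

section InversePairs

variable {ι F : Type*} [Field F]

def withInv (x : ι → F) : ι × Bool → F := fun p => if p.2 then x p.1 else (x p.1)⁻¹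

lemma withInv_injective {x : ι → F} (hx : Function.Injective x) (hx0 : ∀ u, x u ≠ 0)
    (hx1 : ∀ u v, x u * x v ≠ 1) : Function.Injective (withInv x) := by
  rintro ⟨u, _ | _⟩ ⟨v, _ | _⟩ h <;> simp only [withInv, Bool.false_eq_true, if_false, if_true] at h
  · rw [hx (inv_injective h)]
  · exact absurd (by rw [← h, inv_mul_cancel₀ (hx0 u)]) (hx1 v u)
  · exact absurd (by rw [h, inv_mul_cancel₀ (hx0 v)]) (hx1 u v)
  · rw [hx h]

lemma sub_mul_sub_inv {z t : F} (hz : z ≠ 0) (ht : t ≠ 0) :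
    (z - t) * (z - t⁻¹) = z * (z + z⁻¹ - (t + t⁻¹)) := by
  field_simp
  ring

lemma prod_inv_sub_mul_inv_sub_inv_mul_pow (t : Finset ι) {x : ι → F} (hx0 : ∀ u, x u ≠ 0)
    {z : F} (hz : z ≠ 0) (M : ℕ) :
    (∏ u ∈ t, ((z - x u)⁻¹ * (z - (x u)⁻¹)⁻¹)) * z ^ (M + #t) =
      z ^ M * (∏ u ∈ t, (z + z⁻¹ - (x u + (x u)⁻¹)))⁻¹ := by
  have h (u) (_ : u ∈ t) :
      (z - x u)⁻¹ * (z - (x u)⁻¹)⁻¹ = z⁻¹ * (z + z⁻¹ - (x u + (x u)⁻¹))⁻¹ := by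
    rw [← mul_inv, ← mul_inv, sub_mul_sub_inv hz (hx0 u)]
  rw [prod_congr rfl h, prod_mul_distrib, prod_const, prod_inv_distrib, pow_add, inv_pow]
  field_simp

variable [DecidableEq ι]

lemma erase_product_univ_bool (s : Finset ι) {v : ι} (hv : v ∈ s) (b : Bool) :
    (s ×ˢ univ).erase (v, b) = insert (v, !b) ((s.erase v) ×ˢ univ) := by
  ext ⟨u, c⟩
  by_cases huv : u = v
  · subst huv
    cases b <;> cases c <;> simp [hv]
  · simp [huv]

lemma nodalWeight_withInv (s : Finset ι) (x : ι → F) {v : ι} (hv : v ∈ s) (b : Bool) :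
    nodalWeight (s ×ˢ univ) (withInv x) (v, b) =
      (withInv x (v, b) - withInv x (v, !b))⁻¹ *
        ∏ u ∈ s.erase v, ((withInv x (v, b) - x u)⁻¹ * (withInv x (v, b) - (x u)⁻¹)⁻¹) := by
  rw [nodalWeight, erase_product_univ_bool s hv, prod_insert (by simp), prod_product]
  simp only [withInv, Fintype.prod_bool, if_true, Bool.false_eq_true, if_false]

lemma sum_nodalWeight_withInv_mul_pow (s : Finset ι) (x : ι → F) (hx0 : ∀ u, x u ≠ 0) (M : ℕ) :
    ∑ t ∈ s ×ˢ univ, nodalWeight (s ×ˢ univ) (withInv x) t * withInv x t ^ (M + (#s - 1)) =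
      ∑ v ∈ s, (x v ^ M - (x v)⁻¹ ^ M) *
        ((x v - (x v)⁻¹) * ∏ u ∈ s.erase v, (x v + (x v)⁻¹ - (x u + (x u)⁻¹)))⁻¹ := by
  rw [sum_product]
  refine sum_congr rfl fun v hv => ?_
  rw [← card_erase_of_mem hv, Fintype.sum_bool, nodalWeight_withInv s x hv,
    nodalWeight_withInv s x hv, mul_assoc, mul_assoc]
  simp only [withInv, if_true, Bool.not_true, Bool.not_false, Bool.false_eq_true, if_false]
  rw [prod_inv_sub_mul_inv_sub_inv_mul_pow _ hx0 (hx0 v),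
    prod_inv_sub_mul_inv_sub_inv_mul_pow _ hx0 (inv_ne_zero (hx0 v)), inv_inv, add_comm (x v)⁻¹,
    ← neg_sub (x v), inv_neg]
  simp only [mul_inv]
  ring

end InversePairs

section Factorization

variable {F : Type*} [Field F]

lemma zpow_mul_one_add_pow_mul_one_add_mul_pow {X : F} (hX : X ≠ 0) (W : F) (J K : ℕ) (E : ℤ) :
    X ^ E * (1 + X) ^ J * (1 + W * X) ^ K =
      ∑ p ∈ range (J + 1), ∑ q ∈ range (K + 1),
        W ^ (K - q) * (J.choose p : F) * (K.choose q : F) * X ^ (E + p + (K - q : ℕ)) := by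
  have h1 : (1 + X) ^ J = ∑ p ∈ range (J + 1), X ^ p * (J.choose p : F) := by
    rw [add_comm, add_pow]; simp
  have h2 : (1 + W * X) ^ K = ∑ q ∈ range (K + 1), (W * X) ^ (K - q) * (K.choose q : F) := by
    rw [add_comm, add_pow, ← sum_range_reflect]
    refine sum_congr rfl fun q hq => ?_
    rw [mem_range] at hq
    rw [one_pow, mul_one, show K + 1 - 1 - q = K - q by omega, Nat.choose_symm (by omega)]
  rw [h1, h2, mul_assoc, sum_mul_sum, mul_sum]
  refine sum_congr rfl fun p _ => ?_
  rw [mul_sum]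
  refine sum_congr rfl fun q _ => ?_
  rw [zpow_add₀ hX, zpow_add₀ hX, zpow_natCast, zpow_natCast]
  ring

def laurentEntry (X w : F) (l n j : ℕ) : F :=
  X ^ (((j : ℤ) + 1) - l - n - 1) * (1 + X) ^ j * (1 + w * X) ^ (n - 1 - j) -
    X ^ (-((j : ℤ) + 1) + l + n + 1) * (1 + X⁻¹) ^ j * (1 + w * X⁻¹) ^ (n - 1 - j)

lemma laurentEntry_eq_sum {X : F} (hX : X ≠ 0) (w : F) (l : ℕ) {n j : ℕ} (hj : j < n) :
    laurentEntry X w l n j =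
      ∑ p ∈ range (j + 1), ∑ q ∈ range (n - j),
        w ^ (n - 1 - j - q) * (j.choose p : F) * ((n - 1 - j).choose q : F) *
          (X ^ ((p : ℤ) - q - l - 1) - X ^ (-((p : ℤ) - q - l - 1))) := by
  have hinv : X ^ (-((j : ℤ) + 1) + l + n + 1) = X⁻¹ ^ (((j : ℤ) + 1) - l - n - 1) := by
    rw [inv_zpow']
    congr 1
    ring
  rw [laurentEntry, hinv, zpow_mul_one_add_pow_mul_one_add_mul_pow hX,
    zpow_mul_one_add_pow_mul_one_add_mul_pow (inv_ne_zero hX), show n - j = n - 1 - j + 1 by omega,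
    ← sum_sub_distrib]
  refine sum_congr rfl fun p _ => ?_
  rw [← sum_sub_distrib]
  refine sum_congr rfl fun q hq => ?_
  have hexp : ((j : ℤ) + 1) - l - n - 1 + p + ((n - 1 - j - q : ℕ) : ℤ) = (p : ℤ) - q - l - 1 := by
    rw [mem_range] at hq
    push_cast [show q ≤ n - 1 - j by omega, show j ≤ n - 1 by omega, show 1 ≤ n by omega]
    ring
  rw [hexp, inv_zpow', mul_sub]

lemma intSign_mul_pow_natAbs_sub (a : F) (m : ℤ) :
    (m.sign : F) * (a ^ m.natAbs - a⁻¹ ^ m.natAbs) = a ^ m - a ^ (-m) := by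
  rcases lt_trichotomy m 0 with hm | rfl | hm
  · rw [Int.sign_eq_neg_one_of_neg hm, ← zpow_natCast, ← zpow_natCast, Int.natCast_natAbs,
      abs_of_neg hm, inv_zpow', neg_neg]
    push_cast
    ring
  · simp
  · rw [Int.sign_eq_one_of_pos hm, ← zpow_natCast, ← zpow_natCast, Int.natCast_natAbs,
      abs_of_pos hm, inv_zpow']
    push_cast
    ring

def lowerFactor {n : ℕ} (x : Fin n → F) : Matrix (Fin n) (Fin n) F :=
  Matrix.of fun i v => if v ≤ i then
    ((x v - (x v)⁻¹) * ∏ u ∈ (Iic i).erase v, (x v + (x v)⁻¹ - (x u + (x u)⁻¹)))⁻¹ else 0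

lemma det_lowerFactor {n : ℕ} (x : Fin n → F) :
    (lowerFactor x).det =
      ((∏ i, ∏ j ∈ Ioi i, (x j + (x j)⁻¹ - x i - (x i)⁻¹)) * ∏ i, (x i - (x i)⁻¹))⁻¹ := by
  have hL : (lowerFactor x).IsLowerTriangular := fun _ _ h => if_neg (not_le.2 h)
  rw [Matrix.det_of_isLowerTriangular _ hL]
  simp only [lowerFactor, Matrix.of_apply, le_refl, if_true, Iic_erase]
  rw [prod_inv_distrib, prod_mul_distrib, mul_comm (∏ i, (x i - (x i)⁻¹)),
    prod_comm' (t' := univ) (s' := fun u => Ioi u) (by simp)]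
  simp only [sub_add_eq_sub_sub]

lemma add_inv_sub_add_inv_ne_zero {a b : F} (ha : a ≠ 0) (hb : b ≠ 0) (hab : a ≠ b)
    (hab' : a * b ≠ 1) : a + a⁻¹ - b - b⁻¹ ≠ 0 := by
  have h : (a + a⁻¹ - b - b⁻¹) * (a * b) = (a - b) * (a * b - 1) := by field_simp; ring
  exact fun h0 => mul_ne_zero (sub_ne_zero.2 hab) (sub_ne_zero.2 hab') (by rw [← h, h0, zero_mul])

lemma sub_inv_ne_zero {a : F} (ha : a ≠ 0) (h : a * a ≠ 1) : a - a⁻¹ ≠ 0 := by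
  rw [sub_ne_zero]
  rintro h'
  exact h (by nth_rw 2 [h']; exact mul_inv_cancel₀ ha)

end Factorization

section RationalFunctions

variable {n : ℕ}

lemma algebraMap_RF_injective :
    Function.Injective (algebraMap (MvPolynomial (Fin n ⊕ Unit) ℚ) (RF n)) :=
  IsFractionRing.injective _ _

lemma Xv_ne_zero (i : Fin n) : Xv n i ≠ 0 :=
  (map_ne_zero_iff _ algebraMap_RF_injective).2 (MvPolynomial.X_ne_zero _)

lemma Xv_injective : Function.Injective (Xv n) := fun _ _ h =>
  Sum.inl_injective (MvPolynomial.X_injective (algebraMap_RF_injective h))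

lemma Xv_mul_Xv_ne_one (i j : Fin n) : Xv n i * Xv n j ≠ 1 := by
  rw [Xv, Xv, ← map_mul, ← map_one (algebraMap (MvPolynomial (Fin n ⊕ Unit) ℚ) (RF n)),
    algebraMap_RF_injective.ne_iff]
  intro h
  simpa using congrArg (MvPolynomial.eval 0) h

@[simps]
def argsIndex (n i : ℕ) (hi : i < n) : Fin (2 * (i + 1)) ↪ Fin n × Bool where
  toFun t := (⟨t / 2, by omega⟩, decide (t.1 % 2 = 0))
  inj' s t h := by
    simp only [Prod.mk.injEq, Fin.mk.injEq, decide_eq_decide] at h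
    exact Fin.ext (by omega)

lemma args_eq_withInv_comp (i : ℕ) (hi : i < n) :
    args n i hi = withInv (Xv n) ∘ argsIndex n i hi := by
  ext t
  by_cases h : t.1 % 2 = 0 <;> simp [args, withInv, h]

lemma map_argsIndex_univ (i : Fin n) : univ.map (argsIndex n i i.2) = Iic i ×ˢ univ := by
  ext ⟨u, b⟩
  simp only [mem_map, mem_univ, true_and, mem_product, and_true, mem_Iic, argsIndex_apply,
    Prod.mk.injEq, Fin.ext_iff, Fin.le_iff_val_le_val]
  constructor
  · rintro ⟨t, ht, -⟩
    have := t.2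
    omega
  · intro hu
    cases b
    · exact ⟨⟨2 * u + 1, by omega⟩, by dsimp only; omega, by simp [Nat.add_mod]⟩
    · exact ⟨⟨2 * u, by omega⟩, by dsimp only; omega, by simp⟩

lemma hz_args (i : Fin n) (M : ℕ) :
    hz (2 * ((i : ℕ) + 1)) ((M : ℤ) - ((i : ℕ) + 1)) (args n i i.2) =
      ∑ v ∈ Iic i, (Xv n v ^ M - (Xv n v)⁻¹ ^ M) * ((Xv n v - (Xv n v)⁻¹) *
        ∏ u ∈ (Iic i).erase v, (Xv n v + (Xv n v)⁻¹ - (Xv n u + (Xv n u)⁻¹)))⁻¹ := by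
  have hinj : Function.Injective (args n i i.2) := by
    rw [args_eq_withInv_comp]
    exact (withInv_injective Xv_injective Xv_ne_zero Xv_mul_Xv_ne_one).comp
      (argsIndex n i i.2).injective
  have h := sum_nodalWeight_mul_pow_eq_hz (2 * i + 1) (M + i) _ hinj
  rw [show ((M + i : ℕ) : ℤ) - (2 * i + 1 : ℕ) = M - ((i : ℕ) + 1) by push_cast; ring] at h
  refine h.symm.trans ?_
  rw [← sum_nodalWeight_withInv_mul_pow _ _ Xv_ne_zero, Fin.card_Iic, Nat.add_sub_cancel,
    ← map_argsIndex_univ, sum_map]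
  simp_rw [nodalWeight_map, args_eq_withInv_comp]
  rfl

lemma of_cent_eq_lowerFactor_mul (l : ℕ) :
    (Matrix.of fun i j : Fin n => cent n l i j) =
      lowerFactor (Xv n) * Matrix.of fun r (j : Fin n) => laurentEntry (Xv n r) (wv n) l n j := by
  ext i j
  set D : Fin n → RF n := fun v => ((Xv n v - (Xv n v)⁻¹) *
    ∏ u ∈ (Iic i).erase v, (Xv n v + (Xv n v)⁻¹ - (Xv n u + (Xv n u)⁻¹)))⁻¹
  set T : ℕ → ℕ → Fin n → RF n := fun p q v =>
    wv n ^ (n - 1 - j - q) * ((j : ℕ).choose p : RF n) * ((n - 1 - j).choose q : RF n) *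
      (Xv n v ^ ((p : ℤ) - q - l - 1) - Xv n v ^ (-((p : ℤ) - q - l - 1)))
  calc cent n l i j
      = ∑ p ∈ range (j + 1), ∑ q ∈ range (n - j), ∑ v ∈ Iic i, D v * T p q v := by
        refine sum_congr rfl fun p _ => sum_congr rfl fun q _ => ?_
        rw [hz_args, mul_sum]
        refine sum_congr rfl fun v _ => ?_
        simp only [D, T]
        rw [← intSign_mul_pow_natAbs_sub]
        ring
    _ = ∑ v ∈ Iic i, D v * laurentEntry (Xv n v) (wv n) l n j := by
        simp_rw [laurentEntry_eq_sum (Xv_ne_zero _) _ _ j.2, mul_sum]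
        rw [sum_congr rfl fun p _ => sum_comm, sum_comm]
    _ = _ := by
        simp only [Matrix.mul_apply, lowerFactor, Matrix.of_apply, ite_mul, zero_mul, ← sum_filter]
        rw [filter_ge_eq_Iic]

end RationalFunctions

theorem stmt_9_general (n l : ℕ) :
    (Matrix.of fun i j : Fin n =>
        Xv n i ^ ((((j : ℕ) : ℤ) + 1) - l - n - 1) * (1 + Xv n i) ^ (j : ℕ) *
            (1 + wv n * Xv n i) ^ (n - 1 - (j : ℕ)) -
          Xv n i ^ (-(((j : ℕ) : ℤ) + 1) + l + n + 1) * (1 + (Xv n i)⁻¹) ^ (j : ℕ) *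
            (1 + wv n * (Xv n i)⁻¹) ^ (n - 1 - (j : ℕ))).det =
    (∏ i : Fin n, ∏ j ∈ Finset.Ioi i,
        (Xv n j + (Xv n j)⁻¹ - Xv n i - (Xv n i)⁻¹)) *
      (∏ i : Fin n, (Xv n i - (Xv n i)⁻¹)) *
      (Matrix.of fun i j : Fin n => cent n l i j).det := by
  have hne : (∏ i : Fin n, ∏ j ∈ Ioi i, (Xv n j + (Xv n j)⁻¹ - Xv n i - (Xv n i)⁻¹)) *
      ∏ i : Fin n, (Xv n i - (Xv n i)⁻¹) ≠ 0 := by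
    refine mul_ne_zero (prod_ne_zero_iff.2 fun i _ => prod_ne_zero_iff.2 fun j hj => ?_)
      (prod_ne_zero_iff.2 fun i _ => ?_)
    · exact add_inv_sub_add_inv_ne_zero (Xv_ne_zero j) (Xv_ne_zero i)
        (Xv_injective.ne (mem_Ioi.1 hj).ne') (Xv_mul_Xv_ne_one j i)
    · exact sub_inv_ne_zero (Xv_ne_zero i) (Xv_mul_Xv_ne_one i i)
  rw [of_cent_eq_lowerFactor_mul, Matrix.det_mul, det_lowerFactor]
  exact (mul_inv_cancel_left₀ hne _).symm

/-- First proof of Theorem 3.2, odd case: rewriting the determinant via complete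
homogeneous symmetric functions. -/
theorem stmt_9 (n l : ℕ) (hn : 1 ≤ n) :
    (Matrix.of fun i j : Fin n =>
        Xv n i ^ ((((j : ℕ) : ℤ) + 1) - l - n - 1) * (1 + Xv n i) ^ (j : ℕ) *
            (1 + wv n * Xv n i) ^ (n - 1 - (j : ℕ)) -
          Xv n i ^ (-(((j : ℕ) : ℤ) + 1) + l + n + 1) * (1 + (Xv n i)⁻¹) ^ (j : ℕ) *
            (1 + wv n * (Xv n i)⁻¹) ^ (n - 1 - (j : ℕ))).det =
    (∏ i : Fin n, ∏ j ∈ Finset.Ioi i,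
        (Xv n j + (Xv n j)⁻¹ - Xv n i - (Xv n i)⁻¹)) *
      (∏ i : Fin n, (Xv n i - (Xv n i)⁻¹)) *
      (Matrix.of fun i j : Fin n => cent n l i j).det :=
  stmt_9_general n l
end
end

section
/- Let K be a field, n ≥ 2 an integer, X_1, …, X_n ∈ K, and let s : K × K → K and t, u : K → K be functions such that for every nonempty subset S ⊆ {1,…,n} the element 1 − ∏_{j∈S} u(X_j) is nonzero. For any finite tuple (Y_1,…,Y_p) of elements of K (satisfying the analogous nonvanishing conditions) define P(Y_1,…,Y_p) = Σ_{σ∈S_p} sgn(σ) · ∏_{1≤i<j≤p} s(Y_{σ(i)}, Y_{σ(j)}) · ∏_{i=1}^p t(Y_{σ(i)})^{i−1} · ∏_{i=1}^p (1 − ∏_{j=i}^p u(Y_{σ(j)}))^{−1}. Then P(X_1,…,X_n) = Σ_{k=1}^n (−1)^{k−1} · (1 − ∏_{j=1}^n u(X_j))^{−1} · P(X_1,…,X_{k−1},X_{k+1},…,X_n) · ∏_{1≤j≤n, j≠k} s(X_k, X_j) · t(X_j). -/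
/-!
Sort the permutations `σ ∈ S_{n+1}` by `k = σ(1)`: they correspond to the pairs `(k, τ)` with
`τ ∈ S_n`, where `σ(i+1)` is the `τ(i)`-th element of `{1,…,n+1} ∖ {k}`, and then
`sgn σ = (-1)^{k-1} sgn τ`. The summand of `P(X)` at `σ` is the summand of
`P(X_1,…,X̂_k,…,X_{n+1})` at `τ` times the factors involving the first position:
`∏_{j≠k} s(X_k, X_j)`, one extra `t(X_j)` for each `j ≠ k` (every other entry moves up
one place), and the outermost denominator `1 - ∏_j u(X_j)`, which does not depend on `σ`.
-/

noncomputable section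

/-- The antisymmetrized expression
`P(Y_1,…,Y_p) = Σ_σ sgn(σ) ∏_{i<j} s(Y_{σ(i)},Y_{σ(j)}) ∏_i t(Y_{σ(i)})^{i−1}
∏_i (1 − ∏_{j=i}^p u(Y_{σ(j)}))⁻¹`. -/
def Pfun {K : Type*} [Field K] (s : K → K → K) (t u : K → K) {p : ℕ}
    (Y : Fin p → K) : K :=
  ∑ σ : Equiv.Perm (Fin p), ((Equiv.Perm.sign σ : ℤ) : K) *
    ((∏ i : Fin p, ∏ j ∈ Finset.Ioi i, s (Y (σ i)) (Y (σ j))) *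
      (∏ i : Fin p, t (Y (σ i)) ^ (i : ℕ)) *
      ∏ i : Fin p, (1 - ∏ j ∈ Finset.Ici i, u (Y (σ j)))⁻¹)

open Finset Equiv Equiv.Perm

namespace Fin

variable {n : ℕ}

/-- The permutation of `Fin (n + 1)` sending `0` to `k` and `i.succ` to `k.succAbove (τ i)`. -/
def consPerm (k : Fin (n + 1)) (τ : Perm (Fin n)) : Perm (Fin (n + 1)) :=
  (decomposeFin.symm (0, τ)).trans k.cycleRange.symm

@[simp] lemma consPerm_zero (k : Fin (n + 1)) (τ : Perm (Fin n)) : consPerm k τ 0 = k := by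
  simp [consPerm]

@[simp] lemma consPerm_succ (k : Fin (n + 1)) (τ : Perm (Fin n)) (i : Fin n) :
    consPerm k τ i.succ = k.succAbove (τ i) := by
  simp [consPerm, decomposeFin_symm_apply_succ]

lemma sign_consPerm (k : Fin (n + 1)) (τ : Perm (Fin n)) :
    sign (consPerm k τ) = (-1) ^ (k : ℕ) * sign τ := by
  have : consPerm k τ = k.cycleRange⁻¹ * decomposeFin.symm (0, τ) := rfl
  rw [this, map_mul, map_inv, sign_cycleRange, decomposeFin.symm_sign]
  simp

lemma comp_consPerm {α : Type*} (Y : Fin (n + 1) → α) (k : Fin (n + 1)) (τ : Perm (Fin n)) :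
    Y ∘ consPerm k τ = Fin.cons (Y k) ((Y ∘ k.succAbove) ∘ τ) := by
  ext i
  cases i using Fin.cases <;> simp

lemma consPerm_injective :
    Function.Injective fun p : Fin (n + 1) × Perm (Fin n) ↦ consPerm p.1 p.2 := by
  rintro ⟨k, τ⟩ ⟨k', τ'⟩ h
  have hk : k = k' := by simpa using congrArg (· 0) h
  subst hk
  refine Prod.ext rfl (Equiv.ext fun i ↦ succAbove_right_injective (p := k) ?_)
  simpa using congrArg (· i.succ) h

lemma sum_perm_succ {M : Type*} [AddCommMonoid M] (f : Perm (Fin (n + 1)) → M) :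
    ∑ σ, f σ = ∑ k, ∑ τ : Perm (Fin n), f (consPerm k τ) := by
  have hbij : Function.Bijective fun p : Fin (n + 1) × Perm (Fin n) ↦ consPerm p.1 p.2 :=
    (Fintype.bijective_iff_injective_and_card _).mpr
      ⟨consPerm_injective, by simp [Fintype.card_perm, Nat.factorial_succ]⟩
  rw [← Fintype.sum_prod_type', ← (Equiv.ofBijective _ hbij).sum_comp]
  rfl

lemma prod_erase_eq_prod_succAbove {M : Type*} [CommMonoid M] (f : Fin (n + 1) → M)
    (k : Fin (n + 1)) : ∏ j ∈ univ.erase k, f j = ∏ i, f (k.succAbove i) := by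
  rw [univ_succAbove n k, erase_cons, prod_map]
  rfl

end Fin

section Recursion

variable {K : Type*} [Field K] (s : K → K → K) (t u : K → K)

/-- The summand of `Pfun s t u Y` at `σ`, as a function of `Z = Y ∘ σ`. -/
def Pterm {p : ℕ} (Z : Fin p → K) : K :=
  (∏ i : Fin p, ∏ j ∈ Ioi i, s (Z i) (Z j)) * (∏ i : Fin p, t (Z i) ^ (i : ℕ)) *
    ∏ i : Fin p, (1 - ∏ j ∈ Ici i, u (Z j))⁻¹

lemma Pfun_eq_sum_Pterm {p : ℕ} (Y : Fin p → K) :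
    Pfun s t u Y = ∑ σ : Perm (Fin p), ((sign σ : ℤ) : K) * Pterm s t u (Y ∘ σ) :=
  rfl

lemma Pterm_cons {n : ℕ} (a : K) (Z : Fin n → K) :
    Pterm s t u (Fin.cons a Z) =
      (∏ j, s a (Z j) * t (Z j)) * (1 - u a * ∏ j, u (Z j))⁻¹ * Pterm s t u Z := by
  have hIci : Ici (0 : Fin (n + 1)) = univ := by ext; simp
  simp only [Pterm, Fin.prod_univ_succ, Fin.prod_Ioi_zero, Fin.prod_Ioi_succ, Fin.prod_Ici_succ,
    hIci, Fin.cons_zero, Fin.cons_succ, Fin.val_zero, Fin.val_succ, pow_zero, pow_succ,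
    prod_mul_distrib]
  ring

lemma Pterm_comp_consPerm {n : ℕ} (Y : Fin (n + 1) → K) (k : Fin (n + 1)) (τ : Perm (Fin n)) :
    Pterm s t u (Y ∘ Fin.consPerm k τ) =
      (∏ j ∈ univ.erase k, s (Y k) (Y j) * t (Y j)) * (1 - ∏ j, u (Y j))⁻¹ *
        Pterm s t u ((Y ∘ k.succAbove) ∘ τ) := by
  rw [Fin.comp_consPerm, Pterm_cons, Fin.prod_univ_succAbove _ k,
    Fin.prod_erase_eq_prod_succAbove]
  simp only [Function.comp_apply, Equiv.prod_comp τ fun j ↦ u (Y (k.succAbove j)),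
    Equiv.prod_comp τ fun j ↦ s (Y k) (Y (k.succAbove j)) * t (Y (k.succAbove j))]

end Recursion

theorem stmt_11_general {K : Type*} [Field K] (n : ℕ)
    (X : Fin (n + 1) → K) (s : K → K → K) (t u : K → K) :
    Pfun s t u X =
      ∑ k : Fin (n + 1), (-1 : K) ^ (k : ℕ) *
        (1 - ∏ j : Fin (n + 1), u (X j))⁻¹ *
        Pfun s t u (X ∘ k.succAbove) *
        ∏ j ∈ Finset.univ.erase k, s (X k) (X j) * t (X j) := by
  rw [Pfun_eq_sum_Pterm, Fin.sum_perm_succ]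
  refine sum_congr rfl fun k _ ↦ ?_
  simp only [Pfun_eq_sum_Pterm, Fin.sign_consPerm, Pterm_comp_consPerm, mul_sum, sum_mul]
  refine sum_congr rfl fun τ _ ↦ ?_
  push_cast
  ring

/-- The recursion satisfied by `P`: here the tuple has length `n + 1 ≥ 2`. -/
theorem stmt_11 {K : Type*} [Field K] (n : ℕ) (hn : 1 ≤ n)
    (X : Fin (n + 1) → K) (s : K → K → K) (t u : K → K)
    (hu : ∀ S : Finset (Fin (n + 1)), S.Nonempty → (1 - ∏ j ∈ S, u (X j)) ≠ 0) :
    Pfun s t u X =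
      ∑ k : Fin (n + 1), (-1 : K) ^ (k : ℕ) *
        (1 - ∏ j : Fin (n + 1), u (X j))⁻¹ *
        Pfun s t u (X ∘ k.succAbove) *
        ∏ j ∈ Finset.univ.erase k, s (X k) (X j) * t (X j) :=
  stmt_11_general n X s t u
end
end
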